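/- arXiv:math/0703862 — 4 statements merged into one kernel-verified Lean document; each statement's English description precedes it below -/
import Mathlib

section
/- Fix r > 0, d > 1, ρ > r, c > 0, and 0 ≤ w < c/ρ. Define F(Δc) = (1 − r(w − Δc/ρ)/(c − Δc))^d for Δc ∈ [0, ρw). Then F is strictly increasing on (0, ρw); in particular F(Δc) > F(0) for all Δc ∈ (0, ρw), so the optimal amount of immediate annuity income to purchase is Δc = 0. -/
lemma key_stmt3 (r ρ c w a b : ℝ) (hr : 0 < r) (hρ : r < ρ) (hw : 0 ≤ w)
    (hwc : ρ * w < c) (ha : 0 ≤ a) (hab : a < b) (hb : b < ρ * w) :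
    0 ≤ 1 - r * (w - a / ρ) / (c - a) ∧
    1 - r * (w - a / ρ) / (c - a) < 1 - r * (w - b / ρ) / (c - b) := by
  have hρ0 : 0 < ρ := hr.trans hρ
  obtain ⟨A, rfl⟩ : ∃ A, a = A * ρ := ⟨a / ρ, (div_mul_cancel₀ a hρ0.ne').symm⟩
  obtain ⟨B, rfl⟩ : ∃ B, b = B * ρ := ⟨b / ρ, (div_mul_cancel₀ b hρ0.ne').symm⟩
  rw [mul_div_cancel_right₀ A hρ0.ne', mul_div_cancel_right₀ B hρ0.ne']
  have hA0 : 0 ≤ A := by nlinarith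
  have hAB : A < B := by nlinarith
  have hAw : A < w := by nlinarith
  have hca : 0 < c - A * ρ := by nlinarith
  have hcb : 0 < c - B * ρ := by nlinarith
  constructor
  · have h1 : r * (w - A) < c - A * ρ := by
      nlinarith [mul_pos (sub_pos.2 hρ) (sub_pos.2 hAw)]
    have := (div_lt_one hca).2 h1
    linarith
  · have h2 : r * (w - B) / (c - B * ρ) < r * (w - A) / (c - A * ρ) := by
      rw [div_lt_div_iff₀ hcb hca]
      nlinarith [mul_pos (mul_pos hr (sub_pos.2 hAB)) (sub_pos.2 hwc)]
    linarith

theorem stmt3 (r d ρ c w : ℝ) (hr : 0 < r) (hd : 1 < d) (hρ : r < ρ) (hc : 0 < c)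
    (hw : 0 ≤ w) (hwc : w < c / ρ) :
    StrictMonoOn (fun Δc : ℝ => (1 - r * (w - Δc / ρ) / (c - Δc)) ^ d) (Set.Ioo 0 (ρ * w)) ∧
    ∀ Δc ∈ Set.Ioo (0 : ℝ) (ρ * w),
      (1 - r * (w - Δc / ρ) / (c - Δc)) ^ d > (1 - r * (w - 0 / ρ) / (c - 0)) ^ d := by
  have hρ0 : 0 < ρ := hr.trans hρ
  have hwc' : ρ * w < c := by
    have := (lt_div_iff₀ hρ0).mp hwc
    linarith
  constructor
  · intro x hx y hy hxy
    have h := key_stmt3 r ρ c w x y hr hρ hw hwc' hx.1.le hxy hy.2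
    exact Real.rpow_lt_rpow h.1 h.2 (by linarith)
  · intro Δ hΔ
    have h := key_stmt3 r ρ c w 0 Δ hr hρ hw hwc' le_rfl hΔ.1 hΔ.2
    exact Real.rpow_lt_rpow h.1 h.2 (by linarith)
end

section
/- Let r > 0, ρ > r, c > 0, A ∈ [0, c], T > 0, and t ∈ [0, T]. Then the safe level with immediate annuities available, w̄̄(A,t) = min[ A(1 − e^{−r(T−t)})/r + (c−A)/ρ, c/ρ ], satisfies w̄̄(A,t) ≤ w̄(A,t) = c(1 − e^{−r(T−t)})/r + (c−A) e^{−ρ(T−t)}/ρ, with strict inequality when t < T and A < c. -/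
/-!
The first argument of the minimum already lies below the deferred-annuity safe level: the gap
between the two is `(c - A)` times the difference of the annuity factors `(1 - e^{-x s}) / x` at
the rates `r` and `ρ`. That factor is a chord slope of the strictly convex function `exp` through
`0`, evaluated at `-x s`, so it strictly decreases in the rate `x` as soon as `s > 0`.
-/

open Real

lemma one_sub_exp_neg_mul_div_lt_of_lt {x y s : ℝ} (hx : 0 < x) (hxy : x < y) (hs : 0 < s) :
    (1 - exp (-y * s)) / y < (1 - exp (-x * s)) / x := by
  have hy : 0 < y := hx.trans hxy
  have slope := strictConvexOn_exp.secant_strict_mono (Set.mem_univ 0) (Set.mem_univ (-y * s))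
    (Set.mem_univ (-x * s)) (by nlinarith) (by nlinarith) (by nlinarith)
  have chord (z : ℝ) (hz : 0 < z) :
      (exp (-z * s) - exp 0) / (-z * s - 0) = (1 - exp (-z * s)) / z / s := by
    rw [exp_zero]
    field_simp
    ring
  rw [chord y hy, chord x hx] at slope
  exact (div_lt_div_iff_of_pos_right hs).mp slope

lemma one_sub_exp_neg_mul_div_le_of_lt {x y s : ℝ} (hx : 0 < x) (hxy : x < y) (hs : 0 ≤ s) :
    (1 - exp (-y * s)) / y ≤ (1 - exp (-x * s)) / x := by
  rcases hs.eq_or_lt with rfl | hs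
  · simp
  · exact (one_sub_exp_neg_mul_div_lt_of_lt hx hxy hs).le

theorem stmt8_general (r ρ c A T t : ℝ) (hr : 0 < r) (hρ : r < ρ)
    (hA : A ∈ Set.Icc 0 c) (ht : t ∈ Set.Icc 0 T) :
    min (A * (1 - Real.exp (-r * (T - t))) / r + (c - A) / ρ) (c / ρ)
      ≤ c * (1 - Real.exp (-r * (T - t))) / r + (c - A) * Real.exp (-ρ * (T - t)) / ρ ∧
    (t < T → A < c →
      min (A * (1 - Real.exp (-r * (T - t))) / r + (c - A) / ρ) (c / ρ)
        < c * (1 - Real.exp (-r * (T - t))) / r + (c - A) * Real.exp (-ρ * (T - t)) / ρ) := by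
  have gap : c * (1 - exp (-r * (T - t))) / r + (c - A) * exp (-ρ * (T - t)) / ρ
      - (A * (1 - exp (-r * (T - t))) / r + (c - A) / ρ)
      = (c - A) * ((1 - exp (-r * (T - t))) / r - (1 - exp (-ρ * (T - t))) / ρ) := by
    ring
  refine ⟨(min_le_left _ _).trans ?_, fun htT hAc => (min_le_left _ _).trans_lt ?_⟩
  · have factor_le := one_sub_exp_neg_mul_div_le_of_lt hr hρ (sub_nonneg.2 ht.2)
    nlinarith [mul_nonneg (sub_nonneg.2 hA.2) (sub_nonneg.2 factor_le)]
  · have factor_lt := one_sub_exp_neg_mul_div_lt_of_lt hr hρ (sub_pos.2 htT)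
    nlinarith [mul_pos (sub_pos.2 hAc) (sub_pos.2 factor_lt)]

theorem stmt8 (r ρ c A T t : ℝ) (hr : 0 < r) (hρ : r < ρ) (hc : 0 < c)
    (hA : A ∈ Set.Icc 0 c) (hT : 0 < T) (ht : t ∈ Set.Icc 0 T) :
    min (A * (1 - Real.exp (-r * (T - t))) / r + (c - A) / ρ) (c / ρ)
      ≤ c * (1 - Real.exp (-r * (T - t))) / r + (c - A) * Real.exp (-ρ * (T - t)) / ρ ∧
    (t < T → A < c →
      min (A * (1 - Real.exp (-r * (T - t))) / r + (c - A) / ρ) (c / ρ)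
        < c * (1 - Real.exp (-r * (T - t))) / r + (c - A) * Real.exp (-ρ * (T - t)) / ρ) :=
  stmt8_general r ρ c A T t hr hρ hA ht
end

section
/- Let f : [0, c/r] → ℝ be given by f(w) = (1 − rw/c)^d with r > 0, c > 0, and let λ, m > 0 with d the larger root of r d^2 − (r+λ+m) d + λ = 0. Then f satisfies the nonlinear HJB equation λ f(w) = (rw − c) f'(w) − m f'(w)^2 / f''(w) for all w ∈ (0, c/r), with boundary conditions f(0) = 1 and f(c/r) = 0. -/
/-!
Write `u = 1 - r w / c`, so that `f = u ^ d` with `u' = -r/c`. Then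
`(r w - c) f' = r d f` and `f'² / f'' = d / (d - 1) f`, so the HJB equation reduces to
`λ = r d - m d / (d - 1)`, which is the quadratic `r d² - (r + λ + m) d + λ = 0`.
The larger root satisfies `d > 1` because the discriminant exceeds `(r - λ - m)²` by `4 r m > 0`;
in particular `f''` does not vanish and `f (c / r) = 0 ^ d = 0`.
-/

open Real

section RpowAffine

variable {g : ℝ → ℝ} {k : ℝ}

theorem deriv_rpow_of_hasDerivAt_const (hg : ∀ x, HasDerivAt g k x) (p : ℝ) {x : ℝ}
    (hx : g x ≠ 0) : deriv (fun y => g y ^ p) x = k * p * g x ^ (p - 1) :=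
  ((hg x).rpow_const (Or.inl hx)).deriv

theorem deriv_deriv_rpow_of_hasDerivAt_const (hg : ∀ x, HasDerivAt g k x) (p : ℝ) {x : ℝ}
    (hx : g x ≠ 0) :
    deriv (deriv fun y => g y ^ p) x = k ^ 2 * p * (p - 1) * g x ^ (p - 2) := by
  have hcont : Continuous g := continuous_iff_continuousAt.2 fun x => (hg x).continuousAt
  have hderiv : deriv (fun y => g y ^ p) =ᶠ[nhds x] fun y => k * p * g y ^ (p - 1) := by
    filter_upwards [(isOpen_ne.preimage hcont).mem_nhds hx] with y hy
    exact deriv_rpow_of_hasDerivAt_const hg p hy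
  rw [hderiv.deriv_eq, (((hg x).rpow_const (Or.inl hx)).const_mul (k * p)).deriv, sub_sub, one_add_one_eq_two]
  ring

end RpowAffine

theorem quadratic_larger_root_eq_zero {a b c x : ℝ} (ha : a ≠ 0) (hD : 0 ≤ b ^ 2 - 4 * a * c)
    (hx : x = (1 / (2 * a)) * (b + √(b ^ 2 - 4 * a * c))) : a * x ^ 2 - b * x + c = 0 := by
  have hdiscrim : discrim a (-b) c = √(b ^ 2 - 4 * a * c) * √(b ^ 2 - 4 * a * c) := by
    rw [mul_self_sqrt hD, discrim]; ring
  have hroot := (quadratic_eq_zero_iff ha hdiscrim x).2 (Or.inl (by rw [hx]; ring))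
  linear_combination hroot

section YoungExponent

variable {r lam m : ℝ}

theorem ruin_discriminant_eq : (r + lam + m) ^ 2 - 4 * r * lam = (lam - r + m) ^ 2 + 4 * m * r := by
  ring

theorem one_lt_ruin_exponent (hr : 0 < r) (hm : 0 < m) :
    1 < (1 / (2 * r)) * ((r + lam + m) + √((r + lam + m) ^ 2 - 4 * r * lam)) := by
  have hsqrt : r - lam - m < √((r + lam + m) ^ 2 - 4 * r * lam) :=
    lt_sqrt_of_sq_lt (by nlinarith)
  rw [one_div_mul_eq_div, one_lt_div (by positivity)]
  linarith

theorem hjb_ruin_identity {c d u A : ℝ} (hr : r ≠ 0) (hc : c ≠ 0) (hu : u ≠ 0) (hA : A ≠ 0)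
    (hd1 : d ≠ 1) (hquad : r * d ^ 2 - (r + lam + m) * d + lam = 0) :
    lam * A = -(c * u) * (-(r / c) * d * (A / u))
      - m * (-(r / c) * d * (A / u)) ^ 2 / ((-(r / c)) ^ 2 * d * (d - 1) * (A / u ^ 2)) := by
  have hd1' : d - 1 ≠ 0 := sub_ne_zero.2 hd1
  field_simp
  linear_combination -hquad

end YoungExponent

theorem stmt11_general (r c lam m d : ℝ) (hr : 0 < r) (hc : 0 < c) (hm : 0 < m)
    (hd : d = (1 / (2 * r)) * ((r + lam + m) + Real.sqrt ((r + lam + m) ^ 2 - 4 * r * lam))) :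
    (∀ w ∈ Set.Ioo (0 : ℝ) (c / r),
      lam * ((1 - r * w / c) ^ d)
        = (r * w - c) * deriv (fun w' : ℝ => (1 - r * w' / c) ^ d) w
          - m * (deriv (fun w' : ℝ => (1 - r * w' / c) ^ d) w) ^ 2
            / deriv (deriv (fun w' : ℝ => (1 - r * w' / c) ^ d)) w) ∧
    ((1 : ℝ) - r * 0 / c) ^ d = 1 ∧ ((1 : ℝ) - r * (c / r) / c) ^ d = 0 := by
  have hd1 : 1 < d := hd ▸ one_lt_ruin_exponent hr hm
  have hquad : r * d ^ 2 - (r + lam + m) * d + lam = 0 :=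
    quadratic_larger_root_eq_zero hr.ne' (ruin_discriminant_eq ▸ by positivity) hd
  refine ⟨fun w ⟨_, hw⟩ => ?_, by simp, ?_⟩
  · have hg (x : ℝ) : HasDerivAt (fun y => 1 - r * y / c) (-(r / c)) x := by
      simpa using (((hasDerivAt_id x).const_mul r).div_const c).const_sub 1
    have hu : 0 < 1 - r * w / c := by
      rw [sub_pos, div_lt_one hc]
      exact (lt_div_iff₀' hr).1 hw
    rw [deriv_rpow_of_hasDerivAt_const hg d hu.ne', deriv_deriv_rpow_of_hasDerivAt_const hg d hu.ne',
      rpow_sub_one hu.ne', rpow_sub hu, rpow_two,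
      show r * w - c = -(c * (1 - r * w / c)) by field_simp; ring]
    exact hjb_ruin_identity hr.ne' hc.ne' hu.ne' (rpow_pos_of_pos hu d).ne' hd1.ne' hquad
  · rw [mul_div_cancel₀ c hr.ne', div_self hc.ne', sub_self]
    exact zero_rpow (by positivity)

theorem stmt11 (r c lam m d : ℝ) (hr : 0 < r) (hc : 0 < c) (hlam : 0 < lam) (hm : 0 < m)
    (hd : d = (1 / (2 * r)) * ((r + lam + m) + Real.sqrt ((r + lam + m) ^ 2 - 4 * r * lam))) :
    (∀ w ∈ Set.Ioo (0 : ℝ) (c / r),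
      lam * ((1 - r * w / c) ^ d)
        = (r * w - c) * deriv (fun w' : ℝ => (1 - r * w' / c) ^ d) w
          - m * (deriv (fun w' : ℝ => (1 - r * w' / c) ^ d) w) ^ 2
            / deriv (deriv (fun w' : ℝ => (1 - r * w' / c) ^ d)) w) ∧
    ((1 : ℝ) - r * 0 / c) ^ d = 1 ∧ ((1 : ℝ) - r * (c / r) / c) ^ d = 0 :=
  stmt11_general r c lam m d hr hc hm hd
end

section
/- Let r > 0, c > 0, λ > 0, m > 0, and d > 1 the larger root of r d^2 − (r+λ+m)d + λ = 0. Define π*(w) = ((μ−r)/σ^2)(c − rw)/((d−1) r) for 0 ≤ w ≤ c/r, and φ(w) = (1 − rw/c)^d. Then the identity (μ−r) π*(w) φ'(w) + (1/2) σ^2 π*(w)^2 φ''(w) = −m φ'(w)^2/φ''(w) holds for all w ∈ (0, c/r); that is, π* achieves the pointwise minimum in the HJB operator. -/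
/-! The function `φ(w) = (1 - r w / c) ^ d` is an explicit power, so `φ'/φ'' = -(c - r w)/((d - 1) r)`
and `π*` is exactly the vertex `-((μ - r)/σ²) φ'/φ''` of the quadratic `π ↦ (μ - r) π φ' + σ² π² φ''/2`,
whose value there is `-m φ'²/φ''`. -/

open Real

lemma hjb_quadratic_at_minimizer (a s p q : ℝ) (hs : s ≠ 0) (hq : q ≠ 0) :
    a * (-(a / s ^ 2) * p / q) * p + 1 / 2 * s ^ 2 * (-(a / s ^ 2) * p / q) ^ 2 * q
      = -((a / s) ^ 2 / 2) * p ^ 2 / q := by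
  field_simp
  ring

lemma hasDerivAt_one_sub_mul_div (r c x : ℝ) :
    HasDerivAt (fun y : ℝ => 1 - r * y / c) (-(r / c)) x := by
  simpa using ((hasDerivAt_id x).const_mul r |>.div_const c).const_sub 1

section PowerOfAffine

variable {r c d : ℝ}

lemma deriv_one_sub_mul_div_rpow (hd : 1 ≤ d) :
    deriv (fun x : ℝ => (1 - r * x / c) ^ d)
      = fun x => -(r / c) * d * (1 - r * x / c) ^ (d - 1) :=
  funext fun x => ((hasDerivAt_one_sub_mul_div r c x).rpow_const (Or.inr hd)).deriv

lemma deriv_deriv_one_sub_mul_div_rpow (hd : 1 ≤ d) {x : ℝ} (hx : 1 - r * x / c ≠ 0) :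
    deriv (deriv (fun x : ℝ => (1 - r * x / c) ^ d)) x
      = (r / c) ^ 2 * d * (d - 1) * (1 - r * x / c) ^ (d - 2) := by
  rw [deriv_one_sub_mul_div_rpow hd,
    (((hasDerivAt_one_sub_mul_div r c x).rpow_const (Or.inl hx)).const_mul _).deriv]
  ring_nf

lemma deriv_div_deriv_deriv_one_sub_mul_div_rpow (hr : r ≠ 0) (hc : c ≠ 0) (hd : 1 < d)
    {x : ℝ} (hx : 0 < 1 - r * x / c) :
    deriv (fun x : ℝ => (1 - r * x / c) ^ d) x
        / deriv (deriv (fun x : ℝ => (1 - r * x / c) ^ d)) x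
      = -(c - r * x) / ((d - 1) * r) := by
  have hsplit : (1 - r * x / c) ^ (d - 1) = (1 - r * x / c) ^ (d - 2) * (1 - r * x / c) := by
    rw [← rpow_add_one hx.ne']
    ring_nf
  have hpow : (1 - r * x / c) ^ (d - 2) ≠ 0 := (rpow_pos_of_pos hx _).ne'
  have hcu : c - r * x = c * (1 - r * x / c) := by field_simp
  have hd0 : d ≠ 0 := by linarith
  have hd1 : d - 1 ≠ 0 := by linarith
  rw [deriv_deriv_one_sub_mul_div_rpow hd.le hx.ne', deriv_one_sub_mul_div_rpow hd.le]
  dsimp only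
  rw [hsplit, hcu]
  generalize (1 - r * x / c) ^ (d - 2) = P at hpow ⊢
  field_simp

end PowerOfAffine

theorem stmt18_general (r c m μ σ d : ℝ) (hr : 0 < r) (hc : 0 < c)
    (hσ : 0 < σ) (hm : m = ((μ - r) / σ) ^ 2 / 2) (hd1 : 1 < d) :
    ∀ w ∈ Set.Ioo (0 : ℝ) (c / r),
      (μ - r) * (((μ - r) / σ ^ 2) * (c - r * w) / ((d - 1) * r))
          * deriv (fun w' : ℝ => (1 - r * w' / c) ^ d) w
        + (1 / 2) * σ ^ 2 * (((μ - r) / σ ^ 2) * (c - r * w) / ((d - 1) * r)) ^ 2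
          * deriv (deriv (fun w' : ℝ => (1 - r * w' / c) ^ d)) w
      = -m * (deriv (fun w' : ℝ => (1 - r * w' / c) ^ d) w) ^ 2
          / deriv (deriv (fun w' : ℝ => (1 - r * w' / c) ^ d)) w := by
  rintro w ⟨-, hw⟩
  have hu : 0 < 1 - r * w / c := by
    rw [sub_pos, div_lt_one hc, ← lt_div_iff₀' hr]
    exact hw
  have hq : deriv (deriv (fun w' : ℝ => (1 - r * w' / c) ^ d)) w ≠ 0 := by
    rw [deriv_deriv_one_sub_mul_div_rpow hd1.le hu.ne']
    have := rpow_pos_of_pos hu (d - 2)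
    have : 0 < d - 1 := by linarith
    positivity
  have hπ : ((μ - r) / σ ^ 2) * (c - r * w) / ((d - 1) * r)
      = -((μ - r) / σ ^ 2) * deriv (fun w' : ℝ => (1 - r * w' / c) ^ d) w
          / deriv (deriv (fun w' : ℝ => (1 - r * w' / c) ^ d)) w := by
    rw [mul_div_assoc _ (deriv _ w),
      deriv_div_deriv_deriv_one_sub_mul_div_rpow hr.ne' hc.ne' hd1 hu]
    ring
  rw [hπ, hm]
  exact hjb_quadratic_at_minimizer _ _ _ _ hσ.ne' hq

theorem stmt18 (r c lam m μ σ d : ℝ) (hr : 0 < r) (hc : 0 < c) (hlam : 0 < lam)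
    (hσ : 0 < σ) (hμ : r < μ) (hm : m = ((μ - r) / σ) ^ 2 / 2) (hd1 : 1 < d)
    (hdq : r * d ^ 2 - (r + lam + m) * d + lam = 0)
    (hdmax : ∀ d' : ℝ, r * d' ^ 2 - (r + lam + m) * d' + lam = 0 → d' ≤ d) :
    ∀ w ∈ Set.Ioo (0 : ℝ) (c / r),
      (μ - r) * (((μ - r) / σ ^ 2) * (c - r * w) / ((d - 1) * r))
          * deriv (fun w' : ℝ => (1 - r * w' / c) ^ d) w
        + (1 / 2) * σ ^ 2 * (((μ - r) / σ ^ 2) * (c - r * w) / ((d - 1) * r)) ^ 2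
          * deriv (deriv (fun w' : ℝ => (1 - r * w' / c) ^ d)) w
      = -m * (deriv (fun w' : ℝ => (1 - r * w' / c) ^ d) w) ^ 2
          / deriv (deriv (fun w' : ℝ => (1 - r * w' / c) ^ d)) w :=
  stmt18_general r c m μ σ d hr hc hσ hm hd1
end
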